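/- For a standard Young tableau T of shape λ ⊢ n, the Jucys-Murphy element J_k = Σ_{1≤i<k}(i,k) acts on Young's seminormal unit e_T by J_k · e_T = c_T(k) · e_T, where c_T(k) is the content (column index minus row index) of the cell of T containing k. -/

import Mathlib

/-!
Murphy's formula writes `e_T` as a product, over the entries `x`, of polynomials in the pairwise
commuting Jucys–Murphy elements `J_x`, the factor for `k` being
`∏_{c ≠ c_T(k)} (J_k - c) / (c_T(k) - c)` with `c` running over the integers in `[-k, k]`
(entries are numbered from `0`). So `(J_k - c_T(k)) e_T` is a multiple of `∏_{|c| ≤ k} (J_k - c)`,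
and it suffices that this product vanishes. In the left regular representation on `ℓ²(S_n)` every
`J_k` is self-adjoint, hence diagonalisable, and its eigenvalues are integers in `[-k, k]`: with
`s = (k-1 k)` one has `J_k = s J_{k-1} s + s`, and a common eigenvector `w` of `J_{k-1}` and `J_k`
either spans an `s`-stable line, on which the eigenvalues of `J_k` and `J_{k-1}` differ by `±1`,
or spans with `s w` a plane containing an eigenvector of `J_{k-1}` for the eigenvalue of `J_k`.
-/

open scoped Classical
open Finset

noncomputable section

namespace NC

/-- Conjugation of a group-algebra element by a permutation, extended linearly. -/
def conjA (n : ℕ) (σ : Equiv.Perm (Fin n)) (g : MonoidAlgebra ℂ (Equiv.Perm (Fin n))) :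
    MonoidAlgebra ℂ (Equiv.Perm (Fin n)) :=
  MonoidAlgebra.mapDomain (fun π => σ * π * σ⁻¹) g

/-- Cycle type of a permutation, including fixed points as parts equal to 1
(a partition of n, as a multiset). -/
def fullType {n : ℕ} (π : Equiv.Perm (Fin n)) : Multiset ℕ :=
  π.cycleType + Multiset.replicate (n - π.support.card) 1

/-- The length of the cycle of `π` containing `x`. -/
def cycLenAt {n : ℕ} (π : Equiv.Perm (Fin n)) (x : Fin n) : ℕ :=
  if π x = x then 1 else (π.cycleOf x).support.card

/-- The conjugacy class `C_λ` of permutations of `S_{n+1}` of cycle type `λ`. -/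
def Ccl (n : ℕ) (lam : Multiset ℕ) : Finset (Equiv.Perm (Fin (n + 1))) :=
  Finset.univ.filter fun π => fullType π = lam

/-- `C_{λ,i}`: permutations of cycle type `λ` having the largest symbol on a cycle of length `i`. -/
def Cset (n : ℕ) (lam : Multiset ℕ) (i : ℕ) : Finset (Equiv.Perm (Fin (n + 1))) :=
  (Ccl n lam).filter fun π => cycLenAt π (Fin.last n) = i

/-- The standard basis element `K_{λ,i}` of `Z_1(n+1)`. -/
def Kel (n : ℕ) (lam : Multiset ℕ) (i : ℕ) : MonoidAlgebra ℂ (Equiv.Perm (Fin (n + 1))) :=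
  ∑ π ∈ Cset n lam i, MonoidAlgebra.single π 1

/-- Membership in the centralizer `Z_1(n+1)` of the group algebra with respect to the
subgroup of permutations fixing the largest symbol. -/
def Z1mem (n : ℕ) (g : MonoidAlgebra ℂ (Equiv.Perm (Fin (n + 1)))) : Prop :=
  ∀ σ : Equiv.Perm (Fin (n + 1)), σ (Fin.last n) = Fin.last n → conjA (n + 1) σ g = g

/-- A filling `T : Fin m → Fin m × Fin m` (position of each entry, as (row, column))
is a standard Young tableau: it is injective and every initial segment of entries occupies a
lower set of cells (entries increase along rows and down columns). -/
def IsSYT (m : ℕ) (T : Fin m → Fin m × Fin m) : Prop :=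
  Function.Injective T ∧
    ∀ k : Fin m, ∀ c : Fin m × Fin m, c.1 ≤ (T k).1 → c.2 ≤ (T k).2 → ∃ j : Fin m, j ≤ k ∧ T j = c

/-- Length of row `r` of a filling. -/
def rowLen (m : ℕ) (T : Fin m → Fin m × Fin m) (r : ℕ) : ℕ :=
  (Finset.univ.filter fun k => ((T k).1 : ℕ) = r).card

/-- The shape of a filling, as the multiset of its (positive) row lengths. -/
def shapeOf (m : ℕ) (T : Fin m → Fin m × Fin m) : Multiset ℕ :=
  ((Multiset.range m).map fun r => rowLen m T r).filter (0 < ·)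

/-- The set of standard Young tableaux of shape `λ` with `m` cells. -/
def SYTall (m : ℕ) (lam : Multiset ℕ) : Finset (Fin m → Fin m × Fin m) :=
  Finset.univ.filter fun T => IsSYT m T ∧ shapeOf m T = lam

/-- `d_λ`, the number of standard Young tableaux of shape `λ`. -/
def dnum (m : ℕ) (lam : Multiset ℕ) : ℕ := (SYTall m lam).card

/-- `SYT_{λ,i}`: standard Young tableaux of shape `λ` in which the largest entry lies at the
end of a row of length `i`. -/
def SYTset (n : ℕ) (lam : Multiset ℕ) (i : ℕ) :
    Finset (Fin (n + 1) → Fin (n + 1) × Fin (n + 1)) :=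
  (SYTall (n + 1) lam).filter fun T => rowLen (n + 1) T ((T (Fin.last n)).1 : ℕ) = i

/-- The content (column minus row) of the entry `k` in the tableau `T`. -/
def ct (m : ℕ) (T : Fin m → Fin m × Fin m) (k : Fin m) : ℤ :=
  ((T k).2 : ℤ) - ((T k).1 : ℤ)

/-- The Jucys–Murphy element `J_{x+1} = Σ_{y<x} (y, x)` of `ℂ[S_m]`. -/
def JM (m : ℕ) (x : Fin m) : MonoidAlgebra ℂ (Equiv.Perm (Fin m)) :=
  ∑ y ∈ Finset.univ.filter (fun y : Fin m => y < x), MonoidAlgebra.single (Equiv.swap y x) 1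

/-- Young's seminormal unit `e_T`: the Gelfand–Tsetlin idempotent attached to `T`, realized by
Murphy's interpolation formula as a product of spectral projections of the Jucys–Murphy
elements onto the content eigenvalues of `T`. -/
def eTg (m : ℕ) (T : Fin m → Fin m × Fin m) : MonoidAlgebra ℂ (Equiv.Perm (Fin m)) :=
  ((List.finRange m).map fun (x : Fin m) =>
    (((((Finset.Icc (-((x : ℕ) : ℤ)) ((x : ℕ) : ℤ)).erase (ct m T x)).sort (· ≤ ·)).map fun c =>
      (((ct m T x - c : ℤ) : ℂ))⁻¹ •
        (JM m x - ((c : ℤ) : ℂ) • (1 : MonoidAlgebra ℂ (Equiv.Perm (Fin m))))).prod)).prod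

/-- The central element `X^λ = Σ_{T ∈ SYT_λ} e_T` of `ℂ[S_m]` (the central orthogonal
idempotent indexed by `λ`). -/
def Xg (m : ℕ) (lam : Multiset ℕ) : MonoidAlgebra ℂ (Equiv.Perm (Fin m)) :=
  ∑ T ∈ SYTall m lam, eTg m T

/-- The `Z_1`-idempotent `Γ^{λ,i} = Σ_{T ∈ SYT_{λ,i}} e_T`. -/
def Gam (n : ℕ) (lam : Multiset ℕ) (i : ℕ) : MonoidAlgebra ℂ (Equiv.Perm (Fin (n + 1))) :=
  ∑ T ∈ SYTset n lam i, eTg (n + 1) T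

/-- `i_-(λ)`: the partition obtained from `λ` by replacing one part `i` by `i - 1`. -/
def iminus (lam : Multiset ℕ) (i : ℕ) : Multiset ℕ :=
  ((i - 1) ::ₘ lam.erase i).filter (0 < ·)

/-- `c_{λ,i} = i - Σ_{k ≥ i} m_k(λ)`: the content of the cell containing the largest entry in
any tableau of shape `λ` with that entry at the end of a row of length `i`. -/
def cCorner (lam : Multiset ℕ) (i : ℕ) : ℤ :=
  (i : ℤ) - ((lam.filter fun k => i ≤ k).card : ℤ)

/-- The multiset of contents of the cells of the Ferrers diagram of `λ`. -/
def contentsM (lam : Multiset ℕ) : Multiset ℤ :=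
  ↑((((lam.sort (· ≤ ·)).reverse.zipIdx).map fun p =>
      (List.range p.1).map fun c => (c : ℤ) - (p.2 : ℤ)).flatten)

/-- The generalized character `γ^{μ,j}_{λ,i} = (n!/d_μ) [K_{λ,i}] Γ^{μ,j}`, the (normalized)
coefficient of the standard basis element `K_{λ,i}` in `Γ^{μ,j}` (computed as the average of the
coefficients of `Γ^{μ,j}` over the class `C_{λ,i}`). -/
def gam (n : ℕ) (mu : Multiset ℕ) (j : ℕ) (lam : Multiset ℕ) (i : ℕ) : ℂ :=
  ((Nat.factorial (n + 1) : ℂ) / (dnum (n + 1) mu : ℂ)) *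
    ((∑ π ∈ Cset n lam i, (Gam n mu j).coeff π) / ((Cset n lam i).card : ℂ))

/-- The irreducible character `χ^μ` evaluated at `π`: `(n!/d_μ)` times the coefficient of `π`
in the central idempotent `X^μ`. -/
def chi (n : ℕ) (mu : Multiset ℕ) (π : Equiv.Perm (Fin (n + 1))) : ℂ :=
  ((Nat.factorial (n + 1) : ℂ) / (dnum (n + 1) mu : ℂ)) * (Xg (n + 1) mu).coeff π

/-- The embedding of a permutation of `Fin n` into `S_{n+1}` fixing the last symbol. -/
def extPerm (n : ℕ) (π : Equiv.Perm (Fin n)) : Equiv.Perm (Fin (n + 1)) :=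
  π.viaFintypeEmbedding (Fin.castSuccEmb : Fin n ↪ Fin (n + 1))

/-- The induced embedding of group algebras `ℂ[S_n] → ℂ[S_{n+1}]`. -/
def embA (n : ℕ) (g : MonoidAlgebra ℂ (Equiv.Perm (Fin n))) :
    MonoidAlgebra ℂ (Equiv.Perm (Fin (n + 1))) :=
  MonoidAlgebra.mapDomain (extPerm n) g

end NC

open Polynomial

lemma Finset.prod_dvd_mul_prod_erase {ι M : Type*} [CommMonoid M] [DecidableEq ι] (s : Finset ι)
    (f : ι → M) (a : ι) : ∏ i ∈ s, f i ∣ f a * ∏ i ∈ s.erase a, f i := by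
  by_cases ha : a ∈ s
  · rw [Finset.mul_prod_erase s f ha]
  · rw [Finset.erase_eq_of_notMem ha]
    exact dvd_mul_left _ _

lemma Finset.prod_map_sort {α M : Type*} [LinearOrder α] [CommMonoid M] (s : Finset α)
    (f : α → M) : ((s.sort (· ≤ ·)).map f).prod = ∏ i ∈ s, f i := by
  rw [Finset.prod_eq_multiset_prod, ← Finset.sort_eq s (· ≤ ·), Multiset.map_coe,
    Multiset.prod_coe]

lemma List.mul_prod_eq_zero_of_commute {M₀ : Type*} [MonoidWithZero M₀] {a b : M₀} {l : List M₀}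
    (hb : b ∈ l) (hab : a * b = 0) (hl : ∀ c ∈ l, Commute a c) : a * l.prod = 0 := by
  induction l with
  | nil => simp at hb
  | cons c l ih =>
    rw [List.prod_cons, ← mul_assoc]
    rcases List.mem_cons.mp hb with rfl | hb
    · rw [hab, zero_mul]
    · rw [(hl c List.mem_cons_self).eq, mul_assoc,
        ih hb fun d hd => hl d (List.mem_cons_of_mem c hd), mul_zero]

lemma Commute.aeval {R A : Type*} [CommSemiring R] [Semiring A] [Algebra R A] {a b : A}
    (h : Commute a b) (p q : R[X]) : Commute (aeval a p) (aeval b q) :=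
  Algebra.commute_of_mem_adjoin_singleton_of_commute (aeval_mem_adjoin_singleton R b)
    (Algebra.commute_of_mem_adjoin_singleton_of_commute (aeval_mem_adjoin_singleton R a)
      h.symm).symm

namespace Module.End

variable {K V : Type*} [Field K] [AddCommGroup V] [Module K V]

lemma exists_hasEigenvector_of_commute [IsAlgClosed K] [FiniteDimensional K V] {f g : End K V}
    (h : Commute f g) {μ : K} (hμ : g.HasEigenvalue μ) :
    ∃ x v, f.HasEigenvector x v ∧ g v = μ • v := by
  have hinv : ∀ v ∈ g.eigenspace μ, f v ∈ g.eigenspace μ := fun v hv =>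
    mapsTo_genEigenspace_of_comm h.symm μ 1 hv
  have : Nontrivial (g.eigenspace μ) := Submodule.nontrivial_iff_ne_bot.mpr hμ
  obtain ⟨x, hx⟩ := exists_eigenvalue (f.restrict hinv)
  obtain ⟨⟨v, hvμ⟩, hvx, hv0⟩ := hx.exists_hasEigenvector
  refine ⟨x, v, ⟨?_, fun h0 => hv0 (Subtype.ext h0)⟩, mem_eigenspace_iff.mp hvμ⟩
  simpa [mem_eigenspace_iff, Subtype.ext_iff, LinearMap.coe_restrict_apply] using hvx

lemma exists_hasEigenvalue_of_eq_conj_add [IsAlgClosed K] [FiniteDimensional K V]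
    {A B S : End K V} (hS : S * S = 1) (hB : B = S * A * S + S) (hAB : Commute A B) {μ : K}
    (hμ : B.HasEigenvalue μ) :
    ∃ x, A.HasEigenvalue x ∧ (μ = x - 1 ∨ μ = x ∨ μ = x + 1) := by
  obtain ⟨x, w, hw, hBw⟩ := exists_hasEigenvector_of_commute hAB hμ
  have hAw : A w = x • w := hw.apply_eq_smul
  have hSSw : S (S w) = w := by rw [← mul_apply, hS, one_apply]
  by_cases hxμ : x = μ
  · exact ⟨x, hasEigenvalue_of_hasEigenvector hw, Or.inr (Or.inl hxμ.symm)⟩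
  by_cases hSw : ∃ ε : K, S w = ε • w
  · obtain ⟨ε, hε⟩ := hSw
    have hεε : ε * ε = 1 := by
      refine smul_left_injective K hw.2 ?_
      simp only [← smul_smul, ← hε, ← map_smul, hSSw, one_smul]
    have hμε : μ = x + ε := by
      refine smul_left_injective K hw.2 ?_
      simp only [← hBw, hB, LinearMap.add_apply, mul_apply, hε, map_smul, hAw, smul_smul]
      rw [mul_left_comm, hεε, mul_one, add_smul]
    refine ⟨x, hasEigenvalue_of_hasEigenvector hw, ?_⟩
    rcases mul_self_eq_one_iff.mp hεε with rfl | rfl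
    · exact Or.inr (Or.inr hμε)
    · exact Or.inl (by rw [hμε, sub_eq_add_neg])
  · -- `S w` and `w` span a plane on which `A` has the eigenvalue `μ`
    set u := S w + (x - μ)⁻¹ • w
    have hu : u ≠ 0 := fun h0 =>
      hSw ⟨-(x - μ)⁻¹, by rw [neg_smul, ← add_eq_zero_iff_eq_neg]; exact h0⟩
    have hASw : A (S w) = μ • S w - w := by
      have hA : A = S * B * S - S := by
        have h : S * (S * A * S + S) * S = (S * S) * A * (S * S) + (S * S) * S := by noncomm_ring
        rw [hB, h, hS, one_mul, mul_one, one_mul, add_sub_cancel_right]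
      rw [hA, LinearMap.sub_apply, mul_apply, mul_apply, hSSw, hBw, map_smul]
    refine ⟨μ, hasEigenvalue_of_hasEigenvector (x := u) ⟨mem_eigenspace_iff.mpr ?_, hu⟩,
      Or.inr (Or.inl rfl)⟩
    have hxμ' : x - μ ≠ 0 := sub_ne_zero.mpr hxμ
    simp only [u, map_add, map_smul, hASw, hAw, smul_add, smul_smul]
    rw [show (x - μ)⁻¹ * x = μ * (x - μ)⁻¹ + 1 by field_simp; ring, add_smul, one_smul]
    abel

lemma IsSemisimple.aeval_prod_X_sub_C_eq_zero [IsAlgClosed K] [FiniteDimensional K V]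
    {f : End K V} (hf : f.IsSemisimple) {ι : Type*} (s : Finset ι) (v : ι → K)
    (hs : ∀ μ, f.HasEigenvalue μ → ∃ i ∈ s, v i = μ) :
    aeval f (∏ i ∈ s, (X - C (v i))) = 0 := by
  refine LinearMap.ext fun w => ?_
  have hw : w ∈ ⨆ μ, f.eigenspace μ := by rw [hf.iSup_eigenspace_eq_top]; trivial
  induction hw using Submodule.iSup_induction' with
  | mem μ w hw =>
    rcases eq_or_ne w 0 with rfl | hw0
    · simp
    obtain ⟨i, hi, rfl⟩ := hs _ (hasEigenvalue_of_hasEigenvector ⟨hw, hw0⟩)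
    rw [aeval_apply_of_hasEigenvector ⟨hw, hw0⟩, eval_prod,
      Finset.prod_eq_zero hi (by simp), zero_smul, LinearMap.zero_apply]
  | zero => simp
  | add w₁ w₂ _ _ h₁ h₂ => simp_all

end Module.End

namespace NC

open MonoidAlgebra

section RegularRepresentation

variable (G : Type*) [Group G] [Fintype G]

def toEuclidean : MonoidAlgebra ℂ G ≃ₗ[ℂ] EuclideanSpace ℂ G :=
  (coeffLinearEquiv ℂ).trans
    ((Finsupp.linearEquivFunOnFinite ℂ ℂ G).trans (WithLp.linearEquiv 2 ℂ _).symm)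

def regRep : MonoidAlgebra ℂ G →ₐ[ℂ] Module.End ℂ (EuclideanSpace ℂ G) :=
  ((toEuclidean G).conjAlgEquiv ℂ).toAlgHom.comp (Algebra.lmul ℂ _)

variable {G}

lemma regRep_injective : Function.Injective (regRep G) :=
  ((toEuclidean G).conjAlgEquiv ℂ).injective.comp Algebra.lmul_injective

lemma regRep_single_apply (t : G) (x : EuclideanSpace ℂ G) (g : G) :
    regRep G (single t 1) x g = x (t⁻¹ * g) := by
  change (single t 1 * (toEuclidean G).symm x).coeff g = _
  rw [coeff_single_mul_apply, one_mul]
  rfl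

lemma isSymmetric_regRep_single {t : G} (ht : t⁻¹ = t) :
    (regRep G (single t 1)).IsSymmetric := by
  intro x y
  simp only [PiLp.inner_apply, regRep_single_apply]
  rw [← Equiv.sum_comp (Equiv.mulLeft t) (fun g => inner ℂ (x g) (y (t⁻¹ * g)))]
  simp only [Equiv.coe_mulLeft, inv_mul_cancel_left]
  rw [ht]

end RegularRepresentation

variable {m : ℕ}

lemma single_mul_JM {τ : Equiv.Perm (Fin m)} {b : Fin m} (hτb : τ b = b)
    (hτ : ∀ z, τ z < b ↔ z < b) :
    single τ (1 : ℂ) * JM m b = JM m b * single τ 1 := by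
  simp only [JM, Finset.mul_sum, Finset.sum_mul, single_mul_single, one_mul]
  refine Finset.sum_equiv τ (fun z => by simp [hτ]) (fun z _ => ?_)
  rw [Equiv.mul_swap_eq_swap_mul, hτb]

lemma JM_commute (a b : Fin m) : Commute (JM m a) (JM m b) := by
  wlog hab : a < b generalizing a b
  · rcases (not_lt.mp hab).eq_or_lt with rfl | hba
    · exact Commute.refl _
    · exact (this b a hba).symm
  refine (Finset.sum_mul ..).trans ((Finset.sum_congr rfl fun y hy => ?_).trans
    (Finset.mul_sum ..).symm)
  have hya : y < a := (Finset.mem_filter.mp hy).2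
  refine single_mul_JM (Equiv.swap_apply_of_ne_of_ne (hya.trans hab).ne' hab.ne') fun z => ?_
  rcases eq_or_ne z y with rfl | hzy
  · simp [hab, hya.trans hab]
  rcases eq_or_ne z a with rfl | hza
  · simp [hab, hya.trans hab]
  · rw [Equiv.swap_apply_of_ne_of_ne hzy hza]

lemma JM_eq_zero {k : Fin m} (hk : (k : ℕ) = 0) : JM m k = 0 := by
  refine Finset.sum_eq_zero fun y hy => ?_
  have := (Finset.mem_filter.mp hy).2
  rw [Fin.lt_def] at this
  omega

lemma JM_eq_swap_mul_JM_mul_swap_add {a b : Fin m} (hab : (b : ℕ) = a + 1) :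
    JM m b = single (Equiv.swap a b) 1 * JM m a * single (Equiv.swap a b) 1 +
      single (Equiv.swap a b) 1 := by
  have hfilter : Finset.univ.filter (· < b) = insert a (Finset.univ.filter (· < a)) := by
    ext z
    simp only [Finset.mem_filter, Finset.mem_univ, true_and, Finset.mem_insert, Fin.lt_def,
      Fin.ext_iff]
    omega
  rw [JM, hfilter, Finset.sum_insert (by simp), add_comm, JM, Finset.mul_sum, Finset.sum_mul]
  congr 1
  refine Finset.sum_congr rfl fun y hy => ?_
  have hya : y < a := (Finset.mem_filter.mp hy).2
  have hyb : y ≠ b := by rintro rfl; rw [Fin.lt_def] at hya; omega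
  rw [single_mul_single, single_mul_single, one_mul, one_mul]
  congr 1
  calc Equiv.swap y b = Equiv.swap (Equiv.swap a b y) (Equiv.swap a b a) := by
        rw [Equiv.swap_apply_of_ne_of_ne hya.ne hyb, Equiv.swap_apply_left]
    _ = Equiv.swap a b * Equiv.swap y a * (Equiv.swap a b)⁻¹ := Equiv.swap_apply_apply _ _ _
    _ = _ := by rw [Equiv.swap_inv]

lemma isSymmetric_regRep_JM (k : Fin m) : (regRep _ (JM m k)).IsSymmetric := by
  rw [JM, map_sum]
  exact LinearMap.isSymmetric_sum _ fun y _ => isSymmetric_regRep_single (Equiv.swap_inv y k)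

lemma hasEigenvalue_regRep_JM {k : Fin m} {μ : ℂ} (hμ : (regRep _ (JM m k)).HasEigenvalue μ) :
    ∃ c ∈ Finset.Icc (-(k : ℤ)) k, (c : ℂ) = μ := by
  obtain ⟨j, hj⟩ := k
  induction j generalizing μ with
  | zero =>
    rw [JM_eq_zero rfl, map_zero] at hμ
    obtain ⟨v, hv⟩ := hμ.exists_hasEigenvector
    have hμ0 : μ • v = 0 := hv.apply_eq_smul.symm
    exact ⟨0, by simp, by simpa [eq_comm] using (smul_eq_zero.mp hμ0).resolve_right hv.2⟩
  | succ j ih =>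
    set a : Fin m := ⟨j, by omega⟩
    set s : MonoidAlgebra ℂ (Equiv.Perm (Fin m)) := single (Equiv.swap a ⟨j + 1, hj⟩) 1
    have hss : s * s = 1 := by rw [single_mul_single, Equiv.swap_mul_self, one_mul, one_def]
    obtain ⟨x, hx, hμx⟩ := Module.End.exists_hasEigenvalue_of_eq_conj_add
      (A := regRep _ (JM m a)) (S := regRep _ s) (by rw [← map_mul, hss, map_one])
      (by rw [← map_mul, ← map_mul, ← map_add, JM_eq_swap_mul_JM_mul_swap_add (a := a) rfl])
      ((JM_commute a _).map (regRep _)) hμ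
    obtain ⟨c, hc, rfl⟩ := ih (by omega) hx
    simp only [Finset.mem_Icc] at hc ⊢
    rcases hμx with rfl | rfl | rfl
    · exact ⟨c - 1, by omega, by push_cast; ring⟩
    · exact ⟨c, by omega, rfl⟩
    · exact ⟨c + 1, by omega, by push_cast; ring⟩

lemma aeval_JM_prod_Icc_eq_zero (k : Fin m) :
    aeval (JM m k) (∏ c ∈ Finset.Icc (-(k : ℤ)) k, (X - C (c : ℂ))) = 0 := by
  have hJ : (regRep _ (JM m k)).IsSemisimple :=
    Module.End.isFinitelySemisimple_iff_isSemisimple.mp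
      (isSymmetric_regRep_JM k).isFinitelySemisimple
  apply regRep_injective
  rw [map_zero, ← aeval_algHom_apply]
  exact hJ.aeval_prod_X_sub_C_eq_zero _ _ fun μ hμ => hasEigenvalue_regRep_JM hμ

lemma eTg_eq_prod_aeval (T : Fin m → Fin m × Fin m) :
    eTg m T = ((List.finRange m).map fun x => aeval (JM m x)
      (∏ c ∈ (Finset.Icc (-(x : ℤ)) x).erase (ct m T x),
        C ((ct m T x - c : ℤ) : ℂ)⁻¹ * (X - C (c : ℂ)))).prod := by
  unfold eTg
  congr 1
  refine List.map_congr_left fun x _ => ?_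
  rw [← Finset.prod_map_sort, map_list_prod, List.map_map]
  congr 1
  refine List.map_congr_left fun c _ => ?_
  simp only [Function.comp_apply, map_mul, map_sub, aeval_X, aeval_C,
    Algebra.algebraMap_eq_smul_one, smul_mul_assoc, one_mul]

theorem stmt5_general (n : ℕ) (T : Fin (n + 1) → Fin (n + 1) × Fin (n + 1)) (k : Fin (n + 1)) :
    JM (n + 1) k * eTg (n + 1) T = (ct (n + 1) T k : ℂ) • eTg (n + 1) T := by
  suffices h : aeval (JM (n + 1) k) (X - C (ct (n + 1) T k : ℂ)) * eTg (n + 1) T = 0 by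
    rwa [map_sub, aeval_X, aeval_C, Algebra.algebraMap_eq_smul_one, sub_mul, smul_mul_assoc,
      one_mul, sub_eq_zero] at h
  rw [eTg_eq_prod_aeval]
  refine List.mul_prod_eq_zero_of_commute (List.mem_map_of_mem (List.mem_finRange k)) ?_ ?_
  · rw [← map_mul]
    refine aeval_eq_zero_of_dvd_aeval_eq_zero ?_ (aeval_JM_prod_Icc_eq_zero k)
    exact (Finset.prod_dvd_mul_prod_erase _ (fun c : ℤ => X - C (c : ℂ)) _).trans
      (mul_dvd_mul_left _ (Finset.prod_dvd_prod_of_dvd _ _ fun c _ => dvd_mul_left _ _))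
  · simp only [List.mem_map]
    rintro _ ⟨x, -, rfl⟩
    exact (JM_commute k x).aeval _ _

/-- for a standard Young tableau `T` of shape `λ ⊢ n+1`, the Jucys–Murphy element
`J_k` acts on Young's seminormal unit `e_T` by `J_k e_T = c_T(k) e_T`, where `c_T(k)` is the
content of the cell of `T` containing `k`. -/
theorem stmt5 (n : ℕ) (lam : Multiset ℕ) (hsum : lam.sum = n + 1) (hpos : ∀ a ∈ lam, 0 < a)
    (T : Fin (n + 1) → Fin (n + 1) × Fin (n + 1)) (hT : T ∈ SYTall (n + 1) lam)
    (k : Fin (n + 1)) :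
    JM (n + 1) k * eTg (n + 1) T = (ct (n + 1) T k : ℂ) • eTg (n + 1) T :=
  stmt5_general n T k

end NC
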